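/- arXiv:1005.4210 — 2 statements merged into one kernel-verified Lean document; each statement's English description precedes it below -/
import Mathlib

section
/- Let ψ be a slow modulus of continuity, i.e., ∫_s^2 ψ(t)/t² dt ≤ c_ψ·ψ(s)/s for all s ∈ (0,2]. Let h : ℝ → [0,∞) be continuous with |h(x) − h(y)| ≤ K·ψ(|x−y|), and let θ be a point where h(θ) > 0. Then for every 0 < s ≤ λ where λ := ψ*(h(θ)/(2K)), we have (1/h(θ))·∫_s^λ |h(θ+t)·h(θ−t) − h(θ)²|/t² dt ≤ C·ψ(s)/s for a constant C depending only on c_ψ and K. -/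
/-!
Write `a = h(θ+t)`, `b = h(θ-t)`, `c = h(θ)` and `δ = K ψ(t)`. Below `λ = ψ*(c/(2K))` monotonicity
of `ψ` gives `δ ≤ c/2`, so `|a| ≤ 3c/2`, and `ab - c² = a(b - c) + c(a - c)` yields the pointwise
bound `|ab - c²| ≤ (5/2) K c ψ(t)`. Dividing by `t²`, integrating over `[s, λ] ⊆ [s, 2]` and
invoking the slow condition gives the claim with `C = (5/2) K c_ψ`.
-/

open Set MeasureTheory

/-- The paper's `ψ*(c)`. Since `sInf ∅ = 0`, `0 < psiStar ψ c` forces the level `c` to be attained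
on `[0, 1]`. -/
noncomputable def psiStar (ψ : ℝ → ℝ) (c : ℝ) : ℝ :=
  sInf {u : ℝ | u ∈ Icc (0 : ℝ) 1 ∧ ψ u = c}

section psiStar

variable {ψ : ℝ → ℝ} {c : ℝ}

lemma exists_psiStar_le_of_pos (hpos : 0 < psiStar ψ c) :
    ∃ u ∈ Icc (0 : ℝ) 1, ψ u = c ∧ psiStar ψ c ≤ u := by
  obtain ⟨u, hu, hψu⟩ : {u : ℝ | u ∈ Icc (0 : ℝ) 1 ∧ ψ u = c}.Nonempty := by
    by_contra hempty
    rw [psiStar, not_nonempty_iff_eq_empty.mp hempty, Real.sInf_empty] at hpos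
    exact hpos.false
  exact ⟨u, hu, hψu, csInf_le ⟨0, fun v hv => hv.1.1⟩ ⟨hu, hψu⟩⟩

lemma psiStar_le_one_of_pos (hpos : 0 < psiStar ψ c) : psiStar ψ c ≤ 1 := by
  obtain ⟨u, hu, -, hle⟩ := exists_psiStar_le_of_pos hpos
  exact hle.trans hu.2

lemma MonotoneOn.le_of_le_psiStar (hψ : MonotoneOn ψ (Icc 0 2)) (hpos : 0 < psiStar ψ c)
    {t : ℝ} (ht : 0 ≤ t) (htc : t ≤ psiStar ψ c) : ψ t ≤ c := by
  obtain ⟨u, hu, rfl, hle⟩ := exists_psiStar_le_of_pos hpos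
  exact hψ ⟨ht, (htc.trans hle).trans (hu.2.trans one_le_two)⟩
    ⟨hu.1, hu.2.trans one_le_two⟩ (htc.trans hle)

end psiStar

lemma abs_mul_sub_sq_le {a b c δ : ℝ} (ha : |a - c| ≤ δ) (hb : |b - c| ≤ δ) (hδ : δ ≤ c / 2) :
    |a * b - c ^ 2| ≤ 5 / 2 * c * δ := by
  have hδ0 : 0 ≤ δ := (abs_nonneg _).trans ha
  have hc0 : 0 ≤ c := by linarith
  have haabs : |a| ≤ 3 / 2 * c := by
    rw [abs_le] at ha ⊢
    constructor <;> linarith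
  calc |a * b - c ^ 2| = |a * (b - c) + c * (a - c)| := by congr 1; ring
    _ ≤ |a| * |b - c| + c * |a - c| :=
        (abs_add_le _ _).trans_eq (by rw [abs_mul, abs_mul, abs_of_nonneg hc0])
    _ ≤ 3 / 2 * c * δ + c * δ := by gcongr
    _ = 5 / 2 * c * δ := by ring

lemma abs_mul_sym_sub_sq_le {ψ h : ℝ → ℝ} {K θ t : ℝ}
    (hlip : ∀ x y : ℝ, |h x - h y| ≤ K * ψ |x - y|) (hsmall : K * ψ |t| ≤ h θ / 2) :
    |h (θ + t) * h (θ - t) - h θ ^ 2| ≤ 5 / 2 * h θ * (K * ψ |t|) := by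
  refine abs_mul_sub_sq_le ?_ ?_ hsmall
  · simpa using hlip (θ + t) θ
  · simpa [abs_neg] using hlip (θ - t) θ

/-- No integrability of `f` is required: if it fails, the left side is the junk value `0`. -/
lemma intervalIntegral.integral_mono_on_of_nonneg {f g : ℝ → ℝ} {a b : ℝ} (hab : a ≤ b)
    (hf : ∀ x ∈ Ioc a b, 0 ≤ f x) (hfg : ∀ x ∈ Ioc a b, f x ≤ g x)
    (hg : IntervalIntegrable g volume a b) :
    ∫ x in a..b, f x ≤ ∫ x in a..b, g x := by
  simpa only [intervalIntegral.integral_of_le hab] using setIntegral_mono_of_nonneg hf hfg hg.1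

lemma MonotoneOn.intervalIntegrable_div_sq {ψ : ℝ → ℝ} {a b : ℝ} (hψ : MonotoneOn ψ (Icc a b))
    (ha : 0 < a) (hab : a ≤ b) :
    IntervalIntegrable (fun t => ψ t / t ^ 2) volume a b := by
  have hinv : ContinuousOn (fun t : ℝ => (t ^ 2)⁻¹) (uIcc a b) := by
    refine (continuousOn_pow 2).inv₀ fun t ht => ?_
    rw [uIcc_of_le hab] at ht
    exact pow_ne_zero 2 (ha.trans_le ht.1).ne'
  simpa only [div_eq_mul_inv] using
    ((uIcc_of_le hab ▸ hψ).intervalIntegrable).mul_continuousOn hinv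

lemma integral_div_sq_le_of_slow {ψ : ℝ → ℝ} {cψ s b : ℝ} (hψ : MonotoneOn ψ (Icc 0 2))
    (h0 : ψ 0 = 0) (hslow : ∫ t in s..(2 : ℝ), ψ t / t ^ 2 ≤ cψ * ψ s / s)
    (hs : 0 < s) (hsb : s ≤ b) (hb : b ≤ 2) :
    ∫ t in s..b, ψ t / t ^ 2 ≤ cψ * ψ s / s := by
  have hnonneg : ∀ t ∈ Ioc s 2, 0 ≤ ψ t / t ^ 2 := fun t ht => by
    have := hψ ⟨le_rfl, zero_le_two⟩ ⟨hs.le.trans ht.1.le, ht.2⟩ (hs.le.trans ht.1.le)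
    rw [h0] at this
    positivity
  refine le_trans ?_ hslow
  refine intervalIntegral.integral_mono_interval le_rfl hsb hb
    ((ae_restrict_iff' measurableSet_Ioc).mpr (ae_of_all _ hnonneg)) ?_
  exact (hψ.mono (Icc_subset_Icc hs.le le_rfl)).intervalIntegrable_div_sq hs (hsb.trans hb)

lemma abs_mul_sym_sub_sq_div_sq_le {ψ h : ℝ → ℝ} {K θ t : ℝ} (hmono : MonotoneOn ψ (Icc 0 2))
    (hK : 0 < K) (hlip : ∀ x y : ℝ, |h x - h y| ≤ K * ψ |x - y|)
    (hpos : 0 < psiStar ψ (h θ / (2 * K))) (ht : 0 < t) (htℓ : t ≤ psiStar ψ (h θ / (2 * K))) :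
    |h (θ + t) * h (θ - t) - h θ ^ 2| / t ^ 2 ≤ 5 / 2 * K * h θ * (ψ t / t ^ 2) := by
  have hsmall : K * ψ |t| ≤ h θ / 2 := by
    rw [abs_of_pos ht]
    calc K * ψ t ≤ K * (h θ / (2 * K)) :=
          mul_le_mul_of_nonneg_left (hmono.le_of_le_psiStar hpos ht.le htℓ) hK.le
      _ = h θ / 2 := by field_simp
  have hbound := abs_mul_sym_sub_sq_le hlip hsmall
  rw [abs_of_pos ht] at hbound
  calc _ ≤ 5 / 2 * h θ * (K * ψ t) / t ^ 2 := by gcongr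
    _ = _ := by ring

theorem stmt_12_general (ψ : ℝ → ℝ) (cψ K : ℝ) (h : ℝ → ℝ)
    (hmono : MonotoneOn ψ (Set.Icc 0 2))
    (h0 : ψ 0 = 0)
    (hslow : ∀ s : ℝ, 0 < s → s ≤ 2 →
      (∫ t in s..(2:ℝ), ψ t / t ^ 2) ≤ cψ * ψ s / s)
    (hK : 0 < K) (hcψ : 0 < cψ)
    (hlip : ∀ x y : ℝ, |h x - h y| ≤ K * ψ |x - y|) :
    ∃ C : ℝ, 0 < C ∧ ∀ θ : ℝ, 0 < h θ →
      ∀ s : ℝ, 0 < s →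
        s ≤ sInf {u : ℝ | u ∈ Set.Icc (0:ℝ) 1 ∧ ψ u = h θ / (2 * K)} →
        (1 / h θ) *
            ∫ t in s..(sInf {u : ℝ | u ∈ Set.Icc (0:ℝ) 1 ∧ ψ u = h θ / (2 * K)}),
              |h (θ + t) * h (θ - t) - (h θ) ^ 2| / t ^ 2 ≤
          C * ψ s / s := by
  refine ⟨5 / 2 * K * cψ, by positivity, fun θ hθ s hs hsℓ => ?_⟩
  change s ≤ psiStar ψ (h θ / (2 * K)) at hsℓ
  change 1 / h θ * ∫ t in s..psiStar ψ (h θ / (2 * K)), _ ≤ _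
  set ℓ := psiStar ψ (h θ / (2 * K))
  have hℓ : 0 < ℓ := hs.trans_le hsℓ
  have hℓ2 : ℓ ≤ 2 := (psiStar_le_one_of_pos hℓ).trans one_le_two
  calc 1 / h θ * ∫ t in s..ℓ, |h (θ + t) * h (θ - t) - h θ ^ 2| / t ^ 2
      ≤ 1 / h θ * ∫ t in s..ℓ, 5 / 2 * K * h θ * (ψ t / t ^ 2) := by
        gcongr
        exact intervalIntegral.integral_mono_on_of_nonneg hsℓ (fun t _ => by positivity)
          (fun t ht => abs_mul_sym_sub_sq_div_sq_le hmono hK hlip hℓ (hs.trans ht.1) ht.2)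
          (((hmono.mono (Icc_subset_Icc hs.le hℓ2)).intervalIntegrable_div_sq hs hsℓ).const_mul _)
    _ = 5 / 2 * K * ∫ t in s..ℓ, ψ t / t ^ 2 := by
        rw [intervalIntegral.integral_const_mul]
        field_simp
    _ ≤ 5 / 2 * K * (cψ * ψ s / s) := by
        gcongr
        exact integral_div_sq_le_of_slow hmono h0 (hslow s hs (hsℓ.trans hℓ2)) hs hsℓ hℓ2
    _ = 5 / 2 * K * cψ * ψ s / s := by ring

/-- Let ψ be a slow modulus of continuity and h nonnegative, continuous and
ψ-Lipschitz with constant K. If h(θ) > 0 then, with λ := ψ*(h(θ)/(2K)), for every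
0 < s ≤ λ one has (1/h(θ))·∫_s^λ |h(θ+t)·h(θ−t) − h(θ)²|/t² dt ≤ C·ψ(s)/s,
where C depends only on c_ψ and K. -/
theorem stmt_12 (ψ : ℝ → ℝ) (cψ K : ℝ) (h : ℝ → ℝ)
    (hmono : MonotoneOn ψ (Set.Icc 0 2))
    (hcont : ContinuousOn ψ (Set.Icc 0 2))
    (h0 : ψ 0 = 0) (h1 : ψ 1 = 1)
    (hdec : ∀ s t : ℝ, 0 < s → s ≤ t → t ≤ 2 → ψ t / t ≤ ψ s / s)
    (hslow : ∀ s : ℝ, 0 < s → s ≤ 2 →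
      (∫ t in s..(2:ℝ), ψ t / t ^ 2) ≤ cψ * ψ s / s)
    (hK : 0 < K) (hcψ : 0 < cψ)
    (hhc : Continuous h) (hhnn : ∀ x, 0 ≤ h x)
    (hlip : ∀ x y : ℝ, |h x - h y| ≤ K * ψ |x - y|) :
    ∃ C : ℝ, 0 < C ∧ ∀ θ : ℝ, 0 < h θ →
      ∀ s : ℝ, 0 < s →
        s ≤ sInf {u : ℝ | u ∈ Set.Icc (0:ℝ) 1 ∧ ψ u = h θ / (2 * K)} →
        (1 / h θ) *
            ∫ t in s..(sInf {u : ℝ | u ∈ Set.Icc (0:ℝ) 1 ∧ ψ u = h θ / (2 * K)}),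
              |h (θ + t) * h (θ - t) - (h θ) ^ 2| / t ^ 2 ≤
          C * ψ s / s :=
  stmt_12_general ψ cψ K h hmono h0 hslow hK hcψ hlip
end

section
/- Let ψ be a modulus of continuity, K ≥ 1, and h : circle → [0,∞) continuous with h ≤ 2K and ψ-Lipschitz with constant K. If ξ ∈ 𝕋 and λ := ψ*(h(ξ)/(2K)) > 0, then for all ζ ∈ 𝕋 with |ζ − ξ| ≥ λ and h(ζ) ≥ h(ξ), one has log(h(ζ)/h(ξ)) ≤ log(|ξ−ζ|/(2λ) + 1). -/
/-!
The least solution `λ` of `ψ u = h ξ / (2K)` satisfies `K ψ(λ) ≤ h ξ / 2`, and since `ψ(t)/t` is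
non-increasing, `K ψ(d) ≤ (d/λ) K ψ(λ) ≤ h ξ · d/(2λ)` for `d = |ζ - ξ| ≥ λ`. The `K ψ`-Lipschitz
bound then gives `h ζ ≤ h ξ (d/(2λ) + 1)`, and it remains to take logarithms.
-/

open Set

/-- The paper's `ψ*(s)`: the least `u ∈ [0, 1]` with `ψ u = s`. It is `0` when there is none. -/
noncomputable def modulusInverse (ψ : ℝ → ℝ) (s : ℝ) : ℝ :=
  sInf {u : ℝ | u ∈ Icc (0:ℝ) 1 ∧ ψ u = s}

section modulusInverse

variable {ψ : ℝ → ℝ} {s : ℝ}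

lemma nonempty_of_modulusInverse_pos (hpos : 0 < modulusInverse ψ s) :
    {u : ℝ | u ∈ Icc (0:ℝ) 1 ∧ ψ u = s}.Nonempty := by
  by_contra hempty
  rw [not_nonempty_iff_eq_empty] at hempty
  rw [modulusInverse, hempty, Real.sInf_empty] at hpos
  exact lt_irrefl 0 hpos

lemma modulusInverse_le_of_mem {u : ℝ} (hu : u ∈ Icc (0:ℝ) 1) (hψu : ψ u = s) :
    modulusInverse ψ s ≤ u :=
  csInf_le ⟨0, fun _ hv => hv.1.1⟩ ⟨hu, hψu⟩

lemma modulusInverse_le_one (hpos : 0 < modulusInverse ψ s) : modulusInverse ψ s ≤ 1 := by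
  obtain ⟨u, hu, hψu⟩ := nonempty_of_modulusInverse_pos hpos
  exact (modulusInverse_le_of_mem hu hψu).trans hu.2

lemma apply_modulusInverse_le (hmono : MonotoneOn ψ (Icc 0 1))
    (hpos : 0 < modulusInverse ψ s) : ψ (modulusInverse ψ s) ≤ s := by
  obtain ⟨u, hu, rfl⟩ := nonempty_of_modulusInverse_pos hpos
  have hle := modulusInverse_le_of_mem (ψ := ψ) hu rfl
  exact hmono ⟨hpos.le, hle.trans hu.2⟩ hu hle

end modulusInverse

section DivAntitone

variable {ψ : ℝ → ℝ}
  (hdec : ∀ s t : ℝ, 0 < s → s ≤ t → t ≤ 2 → ψ t / t ≤ ψ s / s)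
include hdec

lemma apply_le_div_mul_of_div_antitone {s t : ℝ} (hs : 0 < s) (hst : s ≤ t) (ht : t ≤ 2) :
    ψ t ≤ ψ s / s * t := by
  have := hdec s t hs hst ht
  rwa [div_le_iff₀ (hs.trans_le hst)] at this

lemma le_apply_of_div_antitone (h1 : ψ 1 = 1) {s : ℝ} (hs : 0 < s) (hs1 : s ≤ 1) : s ≤ ψ s := by
  have := apply_le_div_mul_of_div_antitone hdec hs hs1 one_le_two
  rwa [h1, div_mul_eq_mul_div, le_div_iff₀ hs, one_mul, mul_one] at this

lemma le_mul_div_add_one_of_sub_le {K x y lam d : ℝ} (hK : 0 < K) (hlam : 0 < lam)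
    (hd : lam ≤ d) (hd2 : d ≤ 2) (hψlam : ψ lam ≤ y / (2 * K)) (hxy : x - y ≤ K * ψ d) :
    x ≤ y * (d / (2 * lam) + 1) := by
  have hψd : ψ d ≤ y / (2 * K) / lam * d :=
    (apply_le_div_mul_of_div_antitone hdec hlam hd hd2).trans (by gcongr; linarith)
  have hKψd : K * ψ d ≤ y * (d / (2 * lam)) := by
    calc K * ψ d ≤ K * (y / (2 * K) / lam * d) := by gcongr
      _ = y * (d / (2 * lam)) := by field_simp
  linarith

end DivAntitone

lemma norm_sub_le_two_mul_of_mem_sphere {E : Type*} [SeminormedAddCommGroup E] {r : ℝ}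
    {x y : E} (hx : x ∈ Metric.sphere (0:E) r) (hy : y ∈ Metric.sphere (0:E) r) :
    ‖x - y‖ ≤ 2 * r := by
  rw [mem_sphere_zero_iff_norm] at hx hy
  linarith [norm_sub_le x y]

theorem stmt_15_general (ψ : ℝ → ℝ) (K : ℝ) (h : ℂ → ℝ)
    (hmono : MonotoneOn ψ (Set.Icc 0 2))
    (h1 : ψ 1 = 1)
    (hdec : ∀ s t : ℝ, 0 < s → s ≤ t → t ≤ 2 → ψ t / t ≤ ψ s / s)
    (hK : 1 ≤ K)
    (hlip : ∀ z ∈ Metric.sphere (0:ℂ) 1, ∀ w ∈ Metric.sphere (0:ℂ) 1,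
      |h z - h w| ≤ K * ψ ‖z - w‖)
    (ξ : ℂ) (hξ : ξ ∈ Metric.sphere (0:ℂ) 1)
    (lam : ℝ)
    (hlamdef : lam = sInf {u : ℝ | u ∈ Set.Icc (0:ℝ) 1 ∧ ψ u = h ξ / (2 * K)})
    (hlampos : 0 < lam) :
    ∀ ζ ∈ Metric.sphere (0:ℂ) 1, lam ≤ ‖ζ - ξ‖ → h ξ ≤ h ζ →
      Real.log (h ζ / h ξ) ≤ Real.log (‖ξ - ζ‖ / (2 * lam) + 1) := by
  intro ζ hζ hd hξζ
  change lam = modulusInverse ψ (h ξ / (2 * K)) at hlamdef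
  subst hlamdef
  have hKpos : 0 < K := by linarith
  have hψlam := apply_modulusInverse_le (hmono.mono (Icc_subset_Icc le_rfl one_le_two)) hlampos
  have hξpos : 0 < h ξ := by
    have hlam_le := le_apply_of_div_antitone hdec h1 hlampos (modulusInverse_le_one hlampos)
    exact (div_pos_iff_of_pos_right (by linarith)).mp (by linarith : 0 < h ξ / (2 * K))
  have hgrowth := le_mul_div_add_one_of_sub_le hdec hKpos hlampos hd
    (norm_sub_le_two_mul_of_mem_sphere hζ hξ |>.trans_eq (mul_one 2)) hψlam
    ((le_abs_self _).trans (hlip ζ hζ ξ hξ))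
  rw [norm_sub_rev]
  refine Real.log_le_log (div_pos (hξpos.trans_le hξζ) hξpos) ?_
  rwa [div_le_iff₀ hξpos, mul_comm]

/-- Let ψ be a modulus of continuity, K ≥ 1, and h : 𝕋 → [0,∞) continuous with
h ≤ 2K and ψ-Lipschitz with constant K. If ξ ∈ 𝕋 and λ := ψ*(h(ξ)/(2K)) > 0,
then for all ζ ∈ 𝕋 with |ζ − ξ| ≥ λ and h(ζ) ≥ h(ξ):
log(h(ζ)/h(ξ)) ≤ log(|ξ−ζ|/(2λ) + 1). -/
theorem stmt_15 (ψ : ℝ → ℝ) (K : ℝ) (h : ℂ → ℝ)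
    (hmono : MonotoneOn ψ (Set.Icc 0 2))
    (hcont : ContinuousOn ψ (Set.Icc 0 2))
    (h0 : ψ 0 = 0) (h1 : ψ 1 = 1)
    (hdec : ∀ s t : ℝ, 0 < s → s ≤ t → t ≤ 2 → ψ t / t ≤ ψ s / s)
    (hK : 1 ≤ K)
    (hhc : ContinuousOn h (Metric.sphere (0:ℂ) 1))
    (hhnn : ∀ z ∈ Metric.sphere (0:ℂ) 1, 0 ≤ h z)
    (hhub : ∀ z ∈ Metric.sphere (0:ℂ) 1, h z ≤ 2 * K)
    (hlip : ∀ z ∈ Metric.sphere (0:ℂ) 1, ∀ w ∈ Metric.sphere (0:ℂ) 1,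
      |h z - h w| ≤ K * ψ ‖z - w‖)
    (ξ : ℂ) (hξ : ξ ∈ Metric.sphere (0:ℂ) 1)
    (lam : ℝ)
    (hlamdef : lam = sInf {u : ℝ | u ∈ Set.Icc (0:ℝ) 1 ∧ ψ u = h ξ / (2 * K)})
    (hlampos : 0 < lam) :
    ∀ ζ ∈ Metric.sphere (0:ℂ) 1, lam ≤ ‖ζ - ξ‖ → h ξ ≤ h ζ →
      Real.log (h ζ / h ξ) ≤ Real.log (‖ξ - ζ‖ / (2 * lam) + 1) :=
  stmt_15_general ψ K h hmono h1 hdec hK hlip ξ hξ lam hlamdef hlampos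
end
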